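/- arXiv:0801.1522 — 4 statements merged into one kernel-verified Lean document; each statement's English description precedes it below -/
import Mathlib

section
/- For every integer k ≥ 1, the series S_k := ∑_{j ≥ 1, j and k of opposite parity} (1/(j-k)² + 1/(j+k)²) converges and equals π²/4 - 1/k² when k is odd, and π²/4 when k is even. -/
/-!
As `j` runs over the positive integers of parity opposite to `k`, the numbers `j - k` and
`-(j + k)` run over the odd integers other than `-k`, each exactly once. Hence `S_k` is the sum of
`1/m²` over the odd integers `m ≠ -k`, that is `π²/4` minus `1/k²` when `k` is odd.
The odd sum `π²/4` is `∑_{m ∈ ℤ} 1/m² = π²/3` minus its even part `π²/12`.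
-/

open Real Function Set

section

variable {ι β α : Type*} [AddCommGroup α] [UniformSpace α] [IsUniformAddGroup α]
  [CompleteSpace α] [T2Space α]

theorem HasSum.comp_add_comp {f : β → α} {g₁ g₂ : ι → β} {a : α} (hf : HasSum f a)
    (hg : Injective (Sum.elim g₁ g₂)) (hfg : ∀ x ∉ range g₁ ∪ range g₂, f x = 0) :
    HasSum (fun i => f (g₁ i) + f (g₂ i)) a := by
  have h : HasSum (f ∘ Sum.elim g₁ g₂) a := (hg.hasSum_iff (by rwa [Sum.elim_range])).2 hf
  have h₁ := (h.summable.comp_injective Sum.inl_injective).hasSum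
  have h₂ := (h.summable.comp_injective Sum.inr_injective).hasSum
  rw [← (h₁.sum h₂).unique h]
  exact h₁.add h₂

end

-- The `m = 0` term is `1 / 0 = 0`.
theorem hasSum_int_one_div_sq : HasSum (fun m : ℤ => 1 / (m : ℝ) ^ 2) (π ^ 2 / 3) := by
  rw [show π ^ 2 / 3 = π ^ 2 / 6 + π ^ 2 / 6 - 1 / ((0 : ℤ) : ℝ) ^ 2 by norm_num; ring]
  exact .of_nat_of_neg (by simpa using hasSum_zeta_two) (by simpa using hasSum_zeta_two)

theorem hasSum_int_even_one_div_sq :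
    HasSum (fun m : ℤ => if Even m then 1 / (m : ℝ) ^ 2 else 0) (π ^ 2 / 12) := by
  have hvanish :
      ∀ m ∉ range (2 * · : ℤ → ℤ), (if Even m then 1 / (m : ℝ) ^ 2 else 0) = 0 := by
    intro m hm
    rw [if_neg]
    rintro ⟨n, rfl⟩
    exact hm ⟨n, two_mul n⟩
  rw [← (mul_right_injective₀ two_ne_zero).hasSum_iff hvanish]
  have h : (fun m : ℤ => if Even m then 1 / (m : ℝ) ^ 2 else 0) ∘ (2 * ·) =
      fun n : ℤ => 1 / 4 * (1 / (n : ℝ) ^ 2) := by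
    funext n
    simp only [comp_apply, even_two_mul, if_true, Int.cast_mul, Int.cast_ofNat]
    ring
  rw [h, show π ^ 2 / 12 = 1 / 4 * (π ^ 2 / 3) by ring]
  exact hasSum_int_one_div_sq.mul_left _

noncomputable def oddInvSq (m : ℤ) : ℝ := if Odd m then 1 / (m : ℝ) ^ 2 else 0

theorem oddInvSq_eq_sub_ite_even (m : ℤ) :
    oddInvSq m = 1 / (m : ℝ) ^ 2 - if Even m then 1 / (m : ℝ) ^ 2 else 0 := by
  rcases Int.even_or_odd m with hm | hm
  · simp [oddInvSq, hm, Int.not_odd_iff_even.2 hm]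
  · simp [oddInvSq, hm, Int.not_even_iff_odd.2 hm]

theorem hasSum_oddInvSq : HasSum oddInvSq (π ^ 2 / 4) := by
  rw [funext oddInvSq_eq_sub_ite_even, show π ^ 2 / 4 = π ^ 2 / 3 - π ^ 2 / 12 by ring]
  exact hasSum_int_one_div_sq.sub hasSum_int_even_one_div_sq

theorem oddInvSq_neg_natCast (k : ℕ) :
    oddInvSq (-k) = if Odd k then 1 / (k : ℝ) ^ 2 else 0 := by
  simp [oddInvSq, Int.odd_coe_nat]

abbrev OppositeParity (k : ℕ) : Type := {j : ℕ // 1 ≤ j ∧ Odd (j + k)}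

namespace OppositeParity

theorem injective_sumElim (k : ℕ) :
    Injective (Sum.elim (fun j : OppositeParity k => (j : ℤ) - k)
      fun j : OppositeParity k => -((j : ℤ) + k)) :=
  Injective.sumElim (fun i j h => Subtype.ext (by omega))
    (fun i j h => Subtype.ext (by omega)) fun i j h => by
      have := i.2.1; have := j.2.1; omega

variable {k : ℕ}

theorem odd_mem_range {m : ℤ} (hm : Odd m) (hmk : m ≠ -k) :
    m ∈ range (fun j : OppositeParity k => (j : ℤ) - k) ∪
      range fun j : OppositeParity k => -((j : ℤ) + k) := by
  rw [Int.odd_iff] at hm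
  rcases hmk.lt_or_gt with h | h
  · exact Or.inr ⟨⟨(-m - k).toNat, by omega, by rw [Nat.odd_iff]; omega⟩, by simp; omega⟩
  · exact Or.inl ⟨⟨(m + k).toNat, by omega, by rw [Nat.odd_iff]; omega⟩, by simp; omega⟩

theorem oddInvSq_sub (j : OppositeParity k) :
    oddInvSq ((j : ℤ) - k) = 1 / ((j : ℝ) - k) ^ 2 := by
  have : Odd ((j : ℤ) - k) := by
    have := j.2.2; rw [Nat.odd_iff] at this; rw [Int.odd_iff]; omega
  simp [oddInvSq, this]

theorem oddInvSq_neg_add (j : OppositeParity k) :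
    oddInvSq (-((j : ℤ) + k)) = 1 / ((j : ℝ) + k) ^ 2 := by
  have : Odd (-((j : ℤ) + k)) := by
    have := j.2.2; rw [Nat.odd_iff] at this; rw [Int.odd_iff]; omega
  rw [oddInvSq, if_pos this]
  push_cast
  ring

end OppositeParity

theorem stmt5_general (k : ℕ) :
    HasSum
      (fun j : {j : ℕ // 1 ≤ j ∧ Odd (j + k)} =>
        1 / ((j : ℕ) - (k : ℝ)) ^ 2 + 1 / ((j : ℕ) + (k : ℝ)) ^ 2)
      (if Odd k then Real.pi ^ 2 / 4 - 1 / (k : ℝ) ^ 2 else Real.pi ^ 2 / 4) := by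
  have h := (hasSum_oddInvSq.update (-k : ℤ) 0).comp_add_comp (OppositeParity.injective_sumElim k)
    fun m hm => ?_
  · have hterm (j : OppositeParity k) :
        update oddInvSq (-k) 0 ((j : ℤ) - k) + update oddInvSq (-k) 0 (-((j : ℤ) + k)) =
          1 / ((j : ℝ) - k) ^ 2 + 1 / ((j : ℝ) + k) ^ 2 := by
      have := j.2.1
      rw [update_of_ne (by omega), update_of_ne (by omega), OppositeParity.oddInvSq_sub,
        OppositeParity.oddInvSq_neg_add]
    have hval : 0 - oddInvSq (-k) + π ^ 2 / 4 =
        if Odd k then π ^ 2 / 4 - 1 / (k : ℝ) ^ 2 else π ^ 2 / 4 := by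
      rw [oddInvSq_neg_natCast]; split_ifs <;> ring
    simpa only [hterm, hval] using h
  · by_cases hmk : m = -k
    · rw [hmk, update_self]
    rw [update_of_ne hmk, oddInvSq,
      if_neg fun hodd => hm (OppositeParity.odd_mem_range hodd hmk)]

/-- For `k ≥ 1`, the sum over positive integers `j` of parity opposite to `k`
(i.e. `j + k` is odd) of `1/(j-k)² + 1/(j+k)²` equals `π²/4 - 1/k²` for odd `k`
and `π²/4` for even `k`. -/
theorem stmt5 (k : ℕ) (hk : 1 ≤ k) :
    HasSum
      (fun j : {j : ℕ // 1 ≤ j ∧ Odd (j + k)} =>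
        1 / ((j : ℕ) - (k : ℝ)) ^ 2 + 1 / ((j : ℕ) + (k : ℝ)) ^ 2)
      (if Odd k then Real.pi ^ 2 / 4 - 1 / (k : ℝ) ^ 2 else Real.pi ^ 2 / 4) :=
  stmt5_general k
end

section
/- For every integer k ≥ 1, the series S_k := ∑_{j ≥ 1, j and k of opposite parity} (1/(j-k)⁴ + 1/(j+k)⁴) converges and equals π⁴/48 - 1/k⁴ when k is odd, and π⁴/48 when k is even. -/
open Real

/-! As `j` runs over the positive integers of parity opposite to `k`, the odd integers `j - k`
run over all odd integers `> -k`, and `-(j + k)` over all odd integers `< -k`; since the fourth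
power is even, `S_k` is therefore the sum of `x⁻⁴` over all odd integers `x ≠ -k`. The sum over
all odd integers is `2 (1 - 2⁻⁴) ζ(4) = π⁴/48`, and `-k` is odd exactly when `k` is. -/

theorem hasSum_one_div_two_mul_add_one_pow {p : ℕ} {s : ℝ}
    (hs : HasSum (fun n : ℕ => 1 / (n : ℝ) ^ p) s) :
    HasSum (fun n : ℕ => 1 / (2 * (n : ℝ) + 1) ^ p) ((1 - 1 / 2 ^ p) * s) := by
  have heven : HasSum (fun n : ℕ => 1 / ((2 * n : ℕ) : ℝ) ^ p) (1 / 2 ^ p * s) := by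
    refine (hs.mul_left (1 / 2 ^ p)).congr_fun fun n => ?_
    push_cast
    rw [mul_pow, one_div_mul_one_div]
  obtain ⟨t, hodd⟩ : Summable (fun n : ℕ => 1 / ((2 * n + 1 : ℕ) : ℝ) ^ p) :=
    hs.summable.comp_injective (i := fun n : ℕ => 2 * n + 1) fun a b h => by simp at h; omega
  have ht : 1 / 2 ^ p * s + t = s :=
    (HasSum.even_add_odd (f := fun n : ℕ => 1 / (n : ℝ) ^ p) heven hodd).unique hs
  rw [show (1 - 1 / 2 ^ p) * s = t by linear_combination -ht]
  exact hodd.congr_fun fun n => by push_cast; rfl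

theorem one_div_two_mul_neg_add_one_pow {p : ℕ} (hp : Even p) (z : ℤ) :
    1 / (2 * ((-(z + 1) : ℤ) : ℝ) + 1) ^ p = 1 / (2 * (z : ℝ) + 1) ^ p := by
  rw [← hp.neg_pow]
  push_cast
  ring

section Symmetric

variable {α : Type*} [AddCommGroup α] {g : ℤ → α} {T : α}

theorem hasSum_int_of_hasSum_nat_of_symm [TopologicalSpace α] [IsTopologicalAddGroup α]
    (hsymm : ∀ z, g (-(z + 1)) = g z) {S : α}
    (hS : HasSum (fun n : ℕ => g n) S) : HasSum g (S + S) :=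
  hS.of_nat_of_neg_add_one (by simpa only [hsymm] using hS)

theorem hasSum_nat_sub_add_nat_add [TopologicalSpace α] (hsymm : ∀ z, g (-(z + 1)) = g z)
    (hg : HasSum g T) (c : ℤ) : HasSum (fun n : ℕ => g (n - c) + g (n + c)) T := by
  have hshift : HasSum (fun z => g (z + c)) T := (Equiv.addRight c).hasSum_iff.mpr hg
  refine hshift.nat_add_neg_add_one.congr_fun fun n => ?_
  rw [add_comm, ← hsymm (n - c)]
  congr 2
  ring

theorem hasSum_nat_sub_add_nat_add_add_one [UniformSpace α] [IsUniformAddGroup α]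
    [CompleteSpace α] [T2Space α] (hsymm : ∀ z, g (-(z + 1)) = g z) (hg : HasSum g T)
    (c : ℤ) : HasSum (fun n : ℕ => g (n - c) + g (n + (c + 1))) (T - g c) := by
  have hsummable (d : ℤ) : Summable (fun n : ℕ => g (n + d)) :=
    hg.summable.comp_injective fun a b h => by simpa using h
  obtain ⟨A, hA⟩ : Summable (fun n : ℕ => g (n - c)) := by
    simpa only [sub_eq_add_neg] using hsummable (-c)
  obtain ⟨B, hB⟩ := hsummable c
  have hAB : A + B = T := (hA.add hB).unique (hasSum_nat_sub_add_nat_add hsymm hg c)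
  have hB' : HasSum (fun n : ℕ => g (n + (c + 1))) (B - g c) := by
    simpa [add_assoc, add_comm (1 : ℤ)] using (hasSum_nat_add_iff' 1).mpr hB
  rw [← hAB, add_sub_assoc]
  exact hA.add hB'

end Symmetric

def equivOppositeParity (k : ℕ) : ℕ ≃ {j : ℕ // 1 ≤ j ∧ Odd (j + k)} where
  toFun n := ⟨2 * n + 1 + k % 2, by omega, by rw [Nat.odd_iff]; omega⟩
  invFun j := (j - 1 - k % 2) / 2
  left_inv n := by simp only; omega
  right_inv j := by
    have hj := Nat.odd_iff.mp j.2.2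
    exact Subtype.ext (by simp only; omega)

theorem hasSum_one_div_sub_pow_add_one_div_add_pow {p : ℕ} (hp : Even p) {T : ℝ}
    (hT : HasSum (fun n : ℤ => 1 / (2 * (n : ℝ) + 1) ^ p) T) (k : ℕ) :
    HasSum (fun j : {j : ℕ // 1 ≤ j ∧ Odd (j + k)} =>
        1 / ((j : ℕ) - (k : ℝ)) ^ p + 1 / ((j : ℕ) + (k : ℝ)) ^ p)
      (if Odd k then T - 1 / (k : ℝ) ^ p else T) := by
  set g : ℤ → ℝ := fun n => 1 / (2 * (n : ℝ) + 1) ^ p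
  have hsymm (z : ℤ) : g (-(z + 1)) = g z := one_div_two_mul_neg_add_one_pow hp z
  rw [← (equivOppositeParity k).hasSum_iff]
  obtain ⟨a, rfl | rfl⟩ := Nat.even_or_odd' k
  · have hm : 2 * a % 2 = 0 := by omega
    rw [if_neg (by simp [Nat.not_odd_iff_even])]
    refine (hasSum_nat_sub_add_nat_add hsymm hT a).congr_fun fun n => ?_
    simp only [Function.comp_apply, equivOppositeParity, Equiv.coe_fn_mk, hm, g]
    push_cast
    ring
  · have hm : (2 * a + 1) % 2 = 1 := by omega
    rw [if_pos (by simp), show (1 : ℝ) / ((2 * a + 1 : ℕ) : ℝ) ^ p = g a by push_cast; rfl]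
    refine (hasSum_nat_sub_add_nat_add_add_one hsymm hT a).congr_fun fun n => ?_
    simp only [Function.comp_apply, equivOppositeParity, Equiv.coe_fn_mk, hm, g]
    push_cast
    ring

theorem hasSum_int_one_div_two_mul_add_one_pow_four :
    HasSum (fun n : ℤ => 1 / (2 * (n : ℝ) + 1) ^ 4) (π ^ 4 / 48) := by
  have hnat := (hasSum_one_div_two_mul_add_one_pow hasSum_zeta_four).congr_fun
    (g := fun n : ℕ => 1 / (2 * ((n : ℤ) : ℝ) + 1) ^ 4) fun n => by push_cast; rfl
  have hval : (1 - 1 / 2 ^ 4) * (π ^ 4 / 90) + (1 - 1 / 2 ^ 4) * (π ^ 4 / 90) = π ^ 4 / 48 := by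
    ring
  rw [← hval]
  exact hasSum_int_of_hasSum_nat_of_symm (g := fun n : ℤ => 1 / (2 * (n : ℝ) + 1) ^ 4)
    (one_div_two_mul_neg_add_one_pow (by decide)) hnat

theorem stmt6_general (k : ℕ) :
    HasSum
      (fun j : {j : ℕ // 1 ≤ j ∧ Odd (j + k)} =>
        1 / ((j : ℕ) - (k : ℝ)) ^ 4 + 1 / ((j : ℕ) + (k : ℝ)) ^ 4)
      (if Odd k then Real.pi ^ 4 / 48 - 1 / (k : ℝ) ^ 4 else Real.pi ^ 4 / 48) :=
  hasSum_one_div_sub_pow_add_one_div_add_pow (p := 4) (by decide)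
    hasSum_int_one_div_two_mul_add_one_pow_four k

theorem stmt6 (k : ℕ) (hk : 1 ≤ k) :
    HasSum
      (fun j : {j : ℕ // 1 ≤ j ∧ Odd (j + k)} =>
        1 / ((j : ℕ) - (k : ℝ)) ^ 4 + 1 / ((j : ℕ) + (k : ℝ)) ^ 4)
      (if Odd k then Real.pi ^ 4 / 48 - 1 / (k : ℝ) ^ 4 else Real.pi ^ 4 / 48) :=
  stmt6_general k
end

section
/- For every odd integer a ∈ {1, 3, 5} and every integer k ≥ 1, the series S_k^a := ∑_{j ≥ 1, j and k of opposite parity} (1/(j-k)^a - 1/(j+k)^a) converges and equals 1/k^a when k is odd and 0 when k is even. -/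
/-!
Writing `j = 2n + c` with `c ∈ {1, 2}` of parity opposite to `k`, we get `j + k = 2(n + k) + c - k`,
so the series telescopes to the finite sum `∑_{n<k} 1/(2n + c - k)^a`; its terms are nonnegative
from `n = k` on, so unconditional convergence follows from convergence of the partial sums.
The numbers `2n + c - k`, `n < k`, form a progression of step 2 that is symmetric about `0`
(for `c = 1`), or is so apart from its last term `k` (for `c = 2`); as `a` is odd, the symmetric
part cancels.
-/

open Filter Finset Topology

theorem Finset.sum_range_sub_add {G : Type*} [AddCommGroup G] (h : ℕ → G) (k N : ℕ) :
    ∑ n ∈ range N, (h n - h (n + k)) = ∑ i ∈ range k, h i - ∑ i ∈ range k, h (N + i) := by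
  have hshift : ∑ n ∈ range N, h (n + k) = ∑ n ∈ range (k + N), h n - ∑ i ∈ range k, h i := by
    rw [sum_range_add]
    simp [add_comm]
  rw [sum_sub_distrib, hshift, add_comm k N, sum_range_add]
  abel

theorem hasSum_sub_add_of_antitone {h : ℕ → ℝ} (hh : Antitone h) (hlim : Tendsto h atTop (𝓝 0))
    (k : ℕ) : HasSum (fun n ↦ h n - h (n + k)) (∑ i ∈ range k, h i) := by
  rw [hasSum_iff_tendsto_nat_of_nonneg (fun n ↦ sub_nonneg.2 (hh (n.le_add_right k)))]
  simp only [sum_range_sub_add]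
  have htail : Tendsto (fun N ↦ ∑ i ∈ range k, h (N + i)) atTop (𝓝 0) := by
    simpa using tendsto_finsetSum (range k) fun i _ ↦ hlim.comp (tendsto_add_atTop_nat i)
  simpa using tendsto_const_nhds.sub htail

theorem hasSum_sub_add_of_antitone_add {h : ℕ → ℝ} {m : ℕ} (hh : Antitone fun n ↦ h (n + m))
    (hlim : Tendsto h atTop (𝓝 0)) (k : ℕ) :
    HasSum (fun n ↦ h n - h (n + k)) (∑ i ∈ range k, h i) := by
  rw [← hasSum_nat_add_iff' m]
  have hshift := hasSum_sub_add_of_antitone hh (hlim.comp (tendsto_add_atTop_nat m)) k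
  have hvalue : ∑ i ∈ range k, h i - ∑ i ∈ range m, (h i - h (i + k)) =
      ∑ i ∈ range k, h (i + m) := by
    simp only [sum_range_sub_add, sub_sub_cancel, add_comm m]
  rw [hvalue]
  simpa only [add_right_comm _ k m] using hshift

theorem hasSum_one_div_pow_sub (a k c : ℕ) (ha : a ≠ 0) (hc : 1 ≤ c) :
    HasSum (fun n : ℕ ↦ 1 / (2 * n + c - k : ℝ) ^ a - 1 / (2 * n + c + k : ℝ) ^ a)
      (∑ n ∈ range k, 1 / (2 * n + c - k : ℝ) ^ a) := by
  set h : ℕ → ℝ := fun n ↦ 1 / (2 * n + c - k : ℝ) ^ a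
  have hshift (n : ℕ) : h (n + k) = 1 / (2 * n + c + k : ℝ) ^ a := by
    simp only [h]; push_cast; ring_nf
  have hcR : (1 : ℝ) ≤ c := by exact_mod_cast hc
  have hmono : Antitone fun n ↦ h (n + k) := by
    intro n n' hnn'
    have hnn'R : (n : ℝ) ≤ n' := by exact_mod_cast hnn'
    simp only [hshift]
    exact one_div_le_one_div_of_le (by positivity)
      (pow_le_pow_left₀ (by positivity) (by linarith) a)
  have hlin : Tendsto (fun n : ℕ ↦ (2 * n + c - k : ℝ)) atTop atTop :=
    tendsto_atTop_add_const_right _ _ <| tendsto_atTop_add_const_right _ _ <|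
      tendsto_natCast_atTop_atTop.const_mul_atTop two_pos
  have hlim : Tendsto h atTop (𝓝 0) := by
    simp only [h, one_div]
    exact ((tendsto_pow_atTop ha).comp hlin).inv_tendsto_atTop
  simpa only [hshift] using hasSum_sub_add_of_antitone_add hmono hlim k

theorem sum_range_one_div_pow_eq_zero {a : ℕ} (ha : Odd a) (m : ℕ) :
    ∑ n ∈ range m, 1 / (2 * n + 1 - m : ℝ) ^ a = 0 := by
  have hrefl := sum_range_reflect (fun n : ℕ ↦ 1 / (2 * n + 1 - m : ℝ) ^ a) m
  have hneg : ∀ n ∈ range m, 1 / (2 * (m - 1 - n : ℕ) + 1 - m : ℝ) ^ a =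
      -(1 / (2 * n + 1 - m : ℝ) ^ a) := by
    intro n hn
    rw [Nat.cast_sub (by simp at hn; omega), Nat.cast_sub (by simp at hn; omega), ← div_neg,
      ← ha.neg_pow]
    push_cast; ring_nf
  rw [sum_congr rfl hneg, sum_neg_distrib] at hrefl
  linarith

theorem hasSum_subtype_odd_add_iff {f : ℕ → ℝ} {s : ℝ} {k c : ℕ} (hc : c = 1 ∨ c = 2)
    (hkc : Odd (c + k)) :
    HasSum (fun j : {j : ℕ // 1 ≤ j ∧ Odd (j + k)} ↦ f j) s ↔ HasSum (fun n ↦ f (2 * n + c)) s := by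
  obtain ⟨t, ht⟩ := hkc
  let e : ℕ → {j : ℕ // 1 ≤ j ∧ Odd (j + k)} := fun n ↦ ⟨2 * n + c, by omega, n + t, by omega⟩
  have he : Function.Bijective e := by
    refine ⟨fun n n' hnn' ↦ by simp only [e, Subtype.mk.injEq] at hnn'; omega, ?_⟩
    rintro ⟨j, hj, u, hu⟩
    exact ⟨(j - c) / 2, Subtype.ext (by simp only [e]; omega)⟩
  exact ((Equiv.ofBijective e he).hasSum_iff).symm

theorem hasSum_one_div_pow_sub_opposite_parity (a k c : ℕ) (ha : a ≠ 0) (hc : c = 1 ∨ c = 2)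
    (hkc : Odd (c + k)) :
    HasSum (fun j : {j : ℕ // 1 ≤ j ∧ Odd (j + k)} ↦
        1 / ((j : ℕ) - (k : ℝ)) ^ a - 1 / ((j : ℕ) + (k : ℝ)) ^ a)
      (∑ n ∈ range k, 1 / (2 * n + c - k : ℝ) ^ a) := by
  rw [hasSum_subtype_odd_add_iff
    (f := fun j : ℕ ↦ 1 / (j - k : ℝ) ^ a - 1 / (j + k : ℝ) ^ a) hc hkc]
  simpa only [Nat.cast_add, Nat.cast_mul, Nat.cast_ofNat]
    using hasSum_one_div_pow_sub a k c ha (by omega)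

theorem stmt7_general (a k : ℕ) (ha : a = 1 ∨ a = 3 ∨ a = 5) :
    HasSum
      (fun j : {j : ℕ // 1 ≤ j ∧ Odd (j + k)} =>
        1 / ((j : ℕ) - (k : ℝ)) ^ a - 1 / ((j : ℕ) + (k : ℝ)) ^ a)
      (if Odd k then 1 / (k : ℝ) ^ a else 0) := by
  have hodd : Odd a := by rcases ha with rfl | rfl | rfl <;> decide
  rcases Nat.even_or_odd k with hk | hk
  · rw [if_neg (Nat.not_odd_iff_even.2 hk)]
    have hsum := hasSum_one_div_pow_sub_opposite_parity a k 1 hodd.pos.ne' (by simp) hk.one_add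
    rwa [Nat.cast_one, sum_range_one_div_pow_eq_zero hodd] at hsum
  · rw [if_pos hk]
    have hsum := hasSum_one_div_pow_sub_opposite_parity a k 2 hodd.pos.ne' (by simp)
      (even_two.add_odd hk)
    obtain ⟨m, rfl⟩ : ∃ m, k = m + 1 := ⟨k - 1, by have := hk.pos; omega⟩
    have hsplit : ∑ n ∈ range (m + 1), 1 / (2 * n + (2 : ℕ) - (m + 1 : ℕ) : ℝ) ^ a =
        ∑ n ∈ range m, 1 / (2 * n + 1 - m : ℝ) ^ a + 1 / ((m + 1 : ℕ) : ℝ) ^ a := by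
      rw [sum_range_succ]
      congr 1
      · exact sum_congr rfl fun n _ ↦ by push_cast; ring_nf
      · push_cast; ring_nf
    rwa [hsplit, sum_range_one_div_pow_eq_zero hodd, zero_add] at hsum

/-- For odd `a ∈ {1,3,5}` and `k ≥ 1`, the (term-paired) sum over positive
integers `j` of parity opposite to `k` of `1/(j-k)^a - 1/(j+k)^a` equals
`1/k^a` for odd `k` and `0` for even `k`. -/
theorem stmt7 (a k : ℕ) (ha : a = 1 ∨ a = 3 ∨ a = 5) (hk : 1 ≤ k) :
    HasSum
      (fun j : {j : ℕ // 1 ≤ j ∧ Odd (j + k)} =>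
        1 / ((j : ℕ) - (k : ℝ)) ^ a - 1 / ((j : ℕ) + (k : ℝ)) ^ a)
      (if Odd k then 1 / (k : ℝ) ^ a else 0) :=
  stmt7_general a k ha
end

section
/- Let N ∈ ℕ*, C* > 0, and set σ₀ = π/(4√C*). Suppose real numbers (λ_{k,σ})_{k≥1} satisfy |λ_{k,σ} - k²π²/2| ≤ C*σ²/k for all k and all |σ| < σ₀. Then for any |σ| < σ₀, any j₁, k₁ ∈ {1,…,N} and any j₂, k₂ ∈ ℕ* with j₁ ≠ j₂, k₁ ≠ k₂, j₂ ≠ k₂ and max{j₂, k₂} > (N²+1)/2, the equality λ_{k₁,σ} - λ_{k₂,σ} = λ_{j₁,σ} - λ_{j₂,σ} fails. -/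
open Real

/-!
Modulo `π²/2`, the resonance defect `λ_{k₁} - λ_{k₂} - λ_{j₁} + λ_{j₂}` is the integer
`k₁² - k₂² - j₁² + j₂²`, up to four eigenvalue errors, each below `C*σ₀² = π²/16`. Their sum is
below `π²/4`, so the integer vanishes. But if, say, `j₂ < k₂`, then
`k₂² - j₂² ≥ 2k₂ - 1 > N²`, whereas `k₁² - j₁² ≤ N² - 1`.
-/

lemma pos_of_abs_lt_div_sqrt {σ a c : ℝ} (h : |σ| < a / √c) : 0 < c := by
  by_contra! hc
  rw [Real.sqrt_eq_zero'.mpr hc, div_zero] at h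
  exact (abs_nonneg σ).not_gt h

lemma mul_sq_lt_sq_of_abs_lt_div_sqrt {σ a c : ℝ} (h : |σ| < a / √c) : c * σ ^ 2 < a ^ 2 := by
  have hc := pos_of_abs_lt_div_sqrt h
  rw [lt_div_iff₀ (Real.sqrt_pos.mpr hc)] at h
  have h2 := pow_lt_pow_left₀ h (by positivity) two_ne_zero
  rwa [mul_pow, sq_abs, Real.sq_sqrt hc.le, mul_comm] at h2

lemma sq_add_sq_eq_of_sub_eq_sub {μ : ℕ → ℝ} {c ε : ℝ} (hε : 4 * ε < c) {k₁ k₂ j₁ j₂ : ℕ}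
    (hk₁ : |μ k₁ - c * k₁ ^ 2| ≤ ε) (hk₂ : |μ k₂ - c * k₂ ^ 2| ≤ ε)
    (hj₁ : |μ j₁ - c * j₁ ^ 2| ≤ ε) (hj₂ : |μ j₂ - c * j₂ ^ 2| ≤ ε)
    (h : μ k₁ - μ k₂ = μ j₁ - μ j₂) : k₁ ^ 2 + j₂ ^ 2 = j₁ ^ 2 + k₂ ^ 2 := by
  set m : ℤ := k₁ ^ 2 - k₂ ^ 2 - j₁ ^ 2 + j₂ ^ 2
  have hc : 0 < c := by linarith [(abs_nonneg _).trans hk₁]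
  have hdefect : (m : ℝ) * c = (μ j₁ - c * j₁ ^ 2) - (μ j₂ - c * j₂ ^ 2)
      - (μ k₁ - c * k₁ ^ 2) + (μ k₂ - c * k₂ ^ 2) := by
    simp only [m]; push_cast; linear_combination h
  rw [abs_le] at hk₁ hk₂ hj₁ hj₂
  have hm : |(m : ℝ)| * c < 1 * c := by
    rw [← abs_of_pos hc, ← abs_mul, hdefect, abs_of_pos hc, abs_lt]
    constructor <;> linarith
  have hm0 : m = 0 := Int.abs_lt_one_iff.mp (by exact_mod_cast lt_of_mul_lt_mul_right hm hc.le)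
  have : (k₁ : ℤ) ^ 2 + j₂ ^ 2 = j₁ ^ 2 + k₂ ^ 2 := by linear_combination hm0
  exact_mod_cast this

lemma two_mul_le_sq_of_sq_add_sq_eq {a b c d N : ℕ} (h : a ^ 2 + b ^ 2 = c ^ 2 + d ^ 2)
    (hbd : b < d) (ha : a ≤ N) (hc : 1 ≤ c) : 2 * d ≤ N ^ 2 := by
  have hgap : b ^ 2 + 2 * d ≤ d ^ 2 + 1 := by nlinarith
  have hc2 : 1 ≤ c ^ 2 := Nat.one_le_pow _ _ hc
  have ha2 : a ^ 2 ≤ N ^ 2 := Nat.pow_le_pow_left ha 2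
  omega

lemma two_mul_max_le_sq_of_sq_add_sq_eq {a b c d N : ℕ} (h : a ^ 2 + b ^ 2 = c ^ 2 + d ^ 2)
    (hbd : b ≠ d) (ha : a ∈ Finset.Icc 1 N) (hc : c ∈ Finset.Icc 1 N) : 2 * max b d ≤ N ^ 2 := by
  rw [Finset.mem_Icc] at ha hc
  rcases hbd.lt_or_gt with hlt | hlt
  · rw [max_eq_right hlt.le]
    exact two_mul_le_sq_of_sq_add_sq_eq h hlt ha.2 hc.1
  · rw [max_eq_left hlt.le]
    exact two_mul_le_sq_of_sq_add_sq_eq h.symm hlt hc.2 ha.1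

theorem stmt11_general (N : ℕ) (Cs : ℝ) (lam : ℕ → ℝ → ℝ)
    (hlam : ∀ k : ℕ, 1 ≤ k → ∀ σ : ℝ, |σ| < Real.pi / (4 * Real.sqrt Cs) →
      |lam k σ - (k : ℝ) ^ 2 * Real.pi ^ 2 / 2| ≤ Cs * σ ^ 2 / k)
    (σ : ℝ) (hσ : |σ| < Real.pi / (4 * Real.sqrt Cs))
    (j₁ k₁ j₂ k₂ : ℕ) (hj₁ : j₁ ∈ Finset.Icc 1 N) (hk₁ : k₁ ∈ Finset.Icc 1 N)
    (hj₂ : 1 ≤ j₂) (hk₂ : 1 ≤ k₂)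
    (hjk : j₂ ≠ k₂)
    (hmax : ((N : ℝ) ^ 2 + 1) / 2 < max j₂ k₂) :
    lam k₁ σ - lam k₂ σ ≠ lam j₁ σ - lam j₂ σ := by
  intro hres
  have hσ' : |σ| < (π / 4) / √Cs := by rwa [div_div]
  have hCs := pos_of_abs_lt_div_sqrt hσ'
  have hε : 4 * (Cs * σ ^ 2) < π ^ 2 / 2 := by
    nlinarith [mul_sq_lt_sq_of_abs_lt_div_sqrt hσ', Real.pi_pos]
  have herr : ∀ k : ℕ, 1 ≤ k → |lam k σ - π ^ 2 / 2 * k ^ 2| ≤ Cs * σ ^ 2 := fun k hk => by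
    rw [mul_comm, ← mul_div_assoc]
    exact (hlam k hk σ hσ).trans (div_le_self (by positivity) (by exact_mod_cast hk))
  have hsq := sq_add_sq_eq_of_sub_eq_sub (μ := (lam · σ)) hε (herr k₁ (Finset.mem_Icc.mp hk₁).1)
    (herr k₂ hk₂) (herr j₁ (Finset.mem_Icc.mp hj₁).1) (herr j₂ hj₂) hres
  have hle : (2 : ℝ) * (max j₂ k₂ : ℕ) ≤ (N : ℝ) ^ 2 := by
    exact_mod_cast two_mul_max_le_sq_of_sq_add_sq_eq hsq hjk hk₁ hj₁
  linarith

/-- With `σ₀ = π/(4√C*)` and perturbed eigenvalues satisfying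
`|λ_{k,σ} - k²π²/2| ≤ C*σ²/k`, no resonance relation
`λ_{k₁,σ} - λ_{k₂,σ} = λ_{j₁,σ} - λ_{j₂,σ}` can hold when
`j₁, k₁ ≤ N`, `j₁ ≠ j₂`, `k₁ ≠ k₂`, `j₂ ≠ k₂` and `max{j₂,k₂} > (N²+1)/2`. -/
theorem stmt11 (N : ℕ) (hN : 1 ≤ N) (Cs : ℝ) (hCs : 0 < Cs) (lam : ℕ → ℝ → ℝ)
    (hlam : ∀ k : ℕ, 1 ≤ k → ∀ σ : ℝ, |σ| < Real.pi / (4 * Real.sqrt Cs) →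
      |lam k σ - (k : ℝ) ^ 2 * Real.pi ^ 2 / 2| ≤ Cs * σ ^ 2 / k)
    (σ : ℝ) (hσ : |σ| < Real.pi / (4 * Real.sqrt Cs))
    (j₁ k₁ j₂ k₂ : ℕ) (hj₁ : j₁ ∈ Finset.Icc 1 N) (hk₁ : k₁ ∈ Finset.Icc 1 N)
    (hj₂ : 1 ≤ j₂) (hk₂ : 1 ≤ k₂)
    (hjj : j₁ ≠ j₂) (hkk : k₁ ≠ k₂) (hjk : j₂ ≠ k₂)
    (hmax : ((N : ℝ) ^ 2 + 1) / 2 < max j₂ k₂) :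
    lam k₁ σ - lam k₂ σ ≠ lam j₁ σ - lam j₂ σ :=
  stmt11_general N Cs lam hlam σ hσ j₁ k₁ j₂ k₂ hj₁ hk₁ hj₂ hk₂ hjk hmax
end
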